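/- There exists a constant C>0 such that for every smooth, rapidly decaying (Schwartz-class) divergence-free vector field u = (u₁,u₂,u₃) on ℝ³, one has the identity ∫_{ℝ³} ((u·∇)u)·Δ_h u dx = −∫_{ℝ³} Σ_{k,j=1}^{3} Σ_{i=1}^{2} ∂_j u_k ∂_i u_j ∂_i u_k dx, and consequently the bound |∫_{ℝ³} ((u·∇)u)·Δ_h u dx| ≤ C ∫_{ℝ³} |∇u| |∇_h u|² dx. -/

import Mathlib

/- Common definitions: 3D vector calculus, Leray-Hopf weak solutions,
   homogeneous Besov norms via Littlewood-Paley decomposition. -/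

noncomputable section

open MeasureTheory Real Set
open scoped ENNReal Topology RealInnerProductSpace

/-- Euclidean space ℝ³. -/
abbrev E3 := EuclideanSpace ℝ (Fin 3)

/-- The `i`-th standard basis vector of ℝ³. -/
def e3 (i : Fin 3) : E3 := EuclideanSpace.single i 1

/-- `i`-th partial derivative of a vector field. -/
def pd (i : Fin 3) (f : E3 → E3) (x : E3) : E3 := fderiv ℝ f x (e3 i)

/-- `i`-th partial derivative of a scalar field. -/
def pdS (i : Fin 3) (f : E3 → ℝ) (x : E3) : ℝ := fderiv ℝ f x (e3 i)

/-- `∂ᵢ fⱼ`. -/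
def pdC (i j : Fin 3) (f : E3 → E3) (x : E3) : ℝ := fderiv ℝ (fun y => f y j) x (e3 i)

/-- Divergence of a vector field on ℝ³. -/
def div3 (f : E3 → E3) (x : E3) : ℝ := ∑ i, pd i f x i

/-- Convective term `(a·∇)f`. -/
def advect (a f : E3 → E3) (x : E3) : E3 := ∑ i, a x i • pd i f x

/-- Laplacian of a vector field. -/
def lap3 (f : E3 → E3) (x : E3) : E3 := ∑ i, pd i (pd i f) x

/-- Horizontal Laplacian `Δₕ = ∂₁² + ∂₂²`. -/
def lapH (f : E3 → E3) (x : E3) : E3 := ∑ i ∈ ({0, 1} : Finset (Fin 3)), pd i (pd i f) x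

/-- Gradient of a scalar field, as a vector field. -/
def gradS (f : E3 → ℝ) (x : E3) : E3 := ∑ i, pdS i f x • e3 i

/-- Curl (vorticity) of a vector field on ℝ³. -/
def curl3 (f : E3 → E3) (x : E3) : E3 :=
  (pdC 1 2 f x - pdC 2 1 f x) • e3 0 + (pdC 2 0 f x - pdC 0 2 f x) • e3 1 +
    (pdC 0 1 f x - pdC 1 0 f x) • e3 2

/-- Squared Frobenius norm of the full gradient `|∇f|²`. -/
def gradNormSq (f : E3 → E3) (x : E3) : ℝ := ∑ i, ‖pd i f x‖ ^ 2

/-- Squared Frobenius norm of the horizontal gradient `|∇ₕf|²`. -/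
def gradHNormSq (f : E3 → E3) (x : E3) : ℝ := ∑ i ∈ ({0, 1} : Finset (Fin 3)), ‖pd i f x‖ ^ 2

/-- Squared Frobenius norm `|∇ₕ∇f|²` of all second derivatives `∂ᵢ∂ₖfⱼ`, `i ∈ {1,2}`. -/
def hGrad2Sq (f : E3 → E3) (x : E3) : ℝ :=
  ∑ i ∈ ({0, 1} : Finset (Fin 3)), ∑ k, ‖pd i (pd k f) x‖ ^ 2

/-- Squared L² norm of a vector field. -/
def l2sq (f : E3 → E3) : ℝ := ∫ x, ‖f x‖ ^ 2

/-- Squared L² norm of the gradient (enstrophy-type quantity). -/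
def enst (f : E3 → E3) : ℝ := ∫ x, gradNormSq f x

/-- Divergence-free smooth compactly supported vector fields (the test class 𝒱). -/
def TestVF : Set (E3 → E3) :=
  {f | ContDiff ℝ (⊤ : ℕ∞) f ∧ HasCompactSupport f ∧ ∀ x, div3 f x = 0}

/-- Membership in `H`: the closure of 𝒱 in the L² topology. -/
def MemH (f : E3 → E3) : Prop :=
  ∀ ε > (0 : ℝ), ∃ g ∈ TestVF, eLpNorm (fun x => f x - g x) 2 volume < ENNReal.ofReal ε

/-- H¹ distance between two vector fields. -/
def H1dist (f g : E3 → E3) : ℝ≥0∞ :=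
  eLpNorm (fun x => f x - g x) 2 volume +
    eLpNorm (fun x => fderiv ℝ f x - fderiv ℝ g x) 2 volume

/-- Membership in `V`: the closure of 𝒱 in the H¹ topology. -/
def MemV (f : E3 → E3) : Prop :=
  ∀ ε > (0 : ℝ), ∃ g ∈ TestVF, H1dist f g < ENNReal.ofReal ε

/-- Continuity in the `V` (H¹) topology on `[0,T)`. -/
def VContinuousOn (u : ℝ → E3 → E3) (T : ℝ) : Prop :=
  ∀ t ∈ Ico (0 : ℝ) T, ∀ ε > (0 : ℝ), ∃ δ > (0 : ℝ), ∀ t' ∈ Ico (0 : ℝ) T,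
    |t' - t| < δ → H1dist (u t') (u t) < ENNReal.ofReal ε

/-- H² norm of a vector field. -/
def H2norm (f : E3 → E3) : ℝ≥0∞ :=
  eLpNorm f 2 volume + eLpNorm (fun x => fderiv ℝ f x) 2 volume +
    eLpNorm (fun x => fderiv ℝ (fun y => fderiv ℝ f y) x) 2 volume

/-- `u` is regular on `(0,T)`: `u ∈ C([0,T); V) ∩ L²(0,T; H²(ℝ³))`. -/
def RegularOn (T : ℝ) (u : ℝ → E3 → E3) : Prop :=
  (∀ t ∈ Ico (0 : ℝ) T, MemV (u t)) ∧ VContinuousOn u T ∧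
    ∫⁻ t in Ioo (0 : ℝ) T, H2norm (u t) ^ (2 : ℕ) < ∞

/-- Space-time test functions: smooth, compactly supported in space,
divergence free. -/
def IsSpaceTimeTest (φ : ℝ → E3 → E3) : Prop :=
  ContDiff ℝ (⊤ : ℕ∞) (fun q : ℝ × E3 => φ q.1 q.2) ∧ (∀ t, HasCompactSupport (φ t)) ∧
    ∀ t x, div3 (φ t) x = 0

/-- Leray-Hopf weak solution of the 3D Navier-Stokes equations on `ℝ³ × (0,T)`
with viscosity `ν` and initial datum `u₀`. -/
structure LerayHopf (ν T : ℝ) (u₀ : E3 → E3) (u : ℝ → E3 → E3) : Prop where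
  /-- initial datum -/
  init : u 0 = u₀
  /-- `u(t) ∈ H` for all `t ∈ [0,T)` -/
  memH : ∀ t ∈ Ico (0 : ℝ) T, MemH (u t)
  /-- weak continuity into `H`: `u ∈ C_w([0,T); H)` -/
  weakContH : ∀ v : E3 → E3, MemLp v 2 volume →
    ContinuousOn (fun t => ∫ x, ⟪u t x, v x⟫) (Ico (0 : ℝ) T)
  /-- `u(t) ∈ V` for a.e. `t` -/
  aeMemV : ∀ᵐ t ∂(volume.restrict (Ioo (0 : ℝ) T)), MemV (u t)
  /-- `u ∈ L²(0,T; V)` -/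
  l2V : ∫⁻ t in Ioo (0 : ℝ) T, ENNReal.ofReal (l2sq (u t) + enst (u t)) < ∞
  /-- the equations hold in the sense of distributions -/
  weakEq : ∀ φ : ℝ → E3 → E3, IsSpaceTimeTest φ →
    ∀ᵐ t₀ ∂(volume.restrict (Ioo (0 : ℝ) T)), ∀ᵐ t ∂(volume.restrict (Ioo (0 : ℝ) T)),
      (∫ x, ⟪u t x, φ t x⟫) - ∫ x, ⟪u t₀ x, φ t₀ x⟫ =
        (∫ s in t₀..t, ∫ x, ⟪u s x, deriv (fun τ => φ τ x) s + ν • lap3 (φ s) x⟫) +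
          ∫ s in t₀..t, ∫ x, ⟪advect (u s) (φ s) x, u s x⟫
  /-- energy inequality from time `0` -/
  energy₀ : ∀ t ∈ Ico (0 : ℝ) T,
    l2sq (u t) + 2 * ν * ∫ s in (0 : ℝ)..t, enst (u s) ≤ l2sq u₀
  /-- energy inequality from a.e. `t₀` -/
  energy : ∀ᵐ t₀ ∂(volume.restrict (Ioo (0 : ℝ) T)), ∀ t ∈ Ico t₀ T,
    l2sq (u t) + 2 * ν * ∫ s in t₀..t, enst (u s) ≤ l2sq (u t₀)

/-- A strong (smooth) solution of the 3D Navier-Stokes equations on `ℝ³ × (0,T)`,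
lying in `C([0,T); V) ∩ L²_loc(0,T; H²)`. -/
structure NSStrongSol (ν T : ℝ) (u : ℝ → E3 → E3) (p : ℝ → E3 → ℝ) : Prop where
  smooth : ContDiffOn ℝ (⊤ : ℕ∞) (fun q : ℝ × E3 => u q.1 q.2) (Ioo (0 : ℝ) T ×ˢ univ)
  psmooth : ContDiffOn ℝ (⊤ : ℕ∞) (fun q : ℝ × E3 => p q.1 q.2) (Ioo (0 : ℝ) T ×ˢ univ)
  divfree : ∀ t ∈ Ioo (0 : ℝ) T, ∀ x, div3 (u t) x = 0
  eq : ∀ t ∈ Ioo (0 : ℝ) T, ∀ x,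
    deriv (fun τ => u τ x) t - ν • lap3 (u t) x + advect (u t) (u t) x + gradS (p t) x = 0
  memV : ∀ t ∈ Ico (0 : ℝ) T, MemV (u t)
  contV : VContinuousOn u T
  l2locH2 : ∀ a b : ℝ, 0 < a → a ≤ b → b < T →
    ∫⁻ t in Ioo a b, H2norm (u t) ^ (2 : ℕ) < ∞

/-! ### Littlewood-Paley decomposition and homogeneous Besov norms -/

/-- An admissible Littlewood-Paley family: a nonnegative radial Schwartz function `φ`
supported in the annulus `{3/4 ≤ |ξ| ≤ 8/3}` with `∑_{j∈ℤ} φ(2⁻ʲξ) = 1` for `ξ ≠ 0`. -/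
structure LPFamily where
  φ : E3 → ℝ
  schwartz : ∃ Φ : SchwartzMap E3 ℝ, ∀ x, Φ x = φ x
  radial : ∀ x y : E3, ‖x‖ = ‖y‖ → φ x = φ y
  nonneg : ∀ x, 0 ≤ φ x
  supp : ∀ x, φ x ≠ 0 → 3 / 4 ≤ ‖x‖ ∧ ‖x‖ ≤ 8 / 3
  partition : ∀ x : E3, x ≠ 0 → HasSum (fun j : ℤ => φ ((2 : ℝ) ^ (-j) • x)) 1

/-- The kernel `h = ℱ⁻¹φ` (real-valued since `φ` is real and even). -/
def LPFamily.h (D : LPFamily) (x : E3) : ℝ :=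
  (VectorFourier.fourierIntegral Real.fourierChar volume (innerₗ E3) (fun ξ => (D.φ ξ : ℂ)) (-x)).re

variable {F : Type*} [NormedAddCommGroup F] [NormedSpace ℝ F] [CompleteSpace F]

/-- The homogeneous dyadic block `Δ̇ⱼ f (x) = 2^{3j} ∫ h(2ʲy) f(x-y) dy`. -/
def lpBlock (D : LPFamily) (j : ℤ) (f : E3 → F) (x : E3) : F :=
  ((2 : ℝ) ^ (3 * j)) • ∫ y : E3, D.h ((2 : ℝ) ^ j • y) • f (x - y)

/-- The homogeneous Besov norm `‖f‖_{Ḃ^s_{p,r}}`. -/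
def besovNorm (D : LPFamily) (s : ℝ) (p r : ℝ≥0∞) (f : E3 → F) : ℝ≥0∞ :=
  if r = ∞ then
    ⨆ j : ℤ, ENNReal.ofReal ((2 : ℝ) ^ (s * (j : ℝ))) * eLpNorm (lpBlock D j f) p volume
  else
    (∑' j : ℤ, (ENNReal.ofReal ((2 : ℝ) ^ (s * (j : ℝ))) *
      eLpNorm (lpBlock D j f) p volume) ^ r.toReal) ^ (1 / r.toReal)

/-- The `Ḃ^s_{∞,∞}` norm of the distributional partial derivative `∂ᵢf`, computed
on Littlewood-Paley blocks (where `∂ᵢ Δ̇ⱼ f = Δ̇ⱼ ∂ᵢ f`). -/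
def pdBesov (D : LPFamily) (s : ℝ) (i : Fin 3) (f : E3 → F) : ℝ≥0∞ :=
  ⨆ j : ℤ, ENNReal.ofReal ((2 : ℝ) ^ (s * (j : ℝ))) *
    eLpNorm (fun x => fderiv ℝ (lpBlock D j f) x (e3 i)) ∞ volume

/-- The `Ḃ^s_{∞,∞}` norm of the full gradient `∇f`: the maximum of the norms of
`∂₁f, ∂₂f, ∂₃f`. -/
def gradBesov (D : LPFamily) (s : ℝ) (f : E3 → F) : ℝ≥0∞ :=
  ⨆ i : Fin 3, pdBesov D s i f


/-!
Integrating by parts in a horizontal direction `eᵢ` moves one derivative off `∂ᵢ²u`, and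
`∂ᵢ((u·∇)u) = (∂ᵢu·∇)u + (u·∇)∂ᵢu`. Against `∂ᵢu` the second term is `½ (u·∇)|∂ᵢu|²`, whose
integral is `-½ ∫ (div u) |∂ᵢu|² = 0`. What is left, `-∫ ∑ⱼ ∂ᵢuⱼ ⟪∂ⱼu, ∂ᵢu⟫`, is bounded
pointwise by `|∇u| |∂ᵢu|²` by Cauchy–Schwarz, so `C = 1` works.
-/

namespace SchwartzMap

open LineDeriv

variable {D V W X : Type*} [NormedAddCommGroup D] [NormedSpace ℝ D]
  [NormedAddCommGroup V] [NormedSpace ℝ V] [NormedAddCommGroup W] [NormedSpace ℝ W]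
  [NormedAddCommGroup X] [NormedSpace ℝ X] {ι : Type*} [Fintype ι]

theorem lineDerivOp_pairing (B : V →L[ℝ] W →L[ℝ] X) (f : 𝓢(D, V)) (g : 𝓢(D, W)) (v : D) :
    ∂_{v} (pairing B f g) = pairing B (∂_{v} f) g + pairing B f (∂_{v} g) := by
  ext x
  simp only [lineDerivOp_apply_eq_fderiv, pairing_apply, add_apply]
  rw [(B.hasFDerivAt_of_bilinear (f.hasFDerivAt x) (g.hasFDerivAt x)).fderiv]
  simp [add_comm]

theorem lineDerivOp_comm (f : 𝓢(D, V)) (v w : D) : ∂_{v} (∂_{w} f) = ∂_{w} (∂_{v} f) := by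
  ext x
  have hsymm := (f.smooth 2).contDiffAt.isSymmSndFDerivAt (x := x) (by simp)
  have hsnd : ∀ u u' : D, ∂_{u} (∂_{u'} f) x = fderiv ℝ (fderiv ℝ f) x u u' := fun u u' => by
    show fderiv ℝ (fun y => fderiv ℝ f y u') x u = _
    have hd : DifferentiableAt ℝ (fderiv ℝ f) x := (fderivCLM ℝ D V f).differentiableAt
    rw [fderiv_clm_apply hd (differentiableAt_const u')]
    simp
  rw [hsnd, hsnd, hsymm]

theorem lineDerivOp_postcompCLM (L : V →L[ℝ] W) (f : 𝓢(D, V)) (v : D) :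
    ∂_{v} (f.postcompCLM L) = (∂_{v} f).postcompCLM L := by
  ext x
  show fderiv ℝ (L ∘ f) x v = L (fderiv ℝ f x v)
  rw [(L.hasFDerivAt.comp x (f.hasFDerivAt x)).fderiv]
  rfl

def advection (a : ι → 𝓢(D, ℝ)) (v : ι → D) (f : 𝓢(D, V)) : 𝓢(D, V) :=
  ∑ j, pairing (ContinuousLinearMap.lsmul ℝ ℝ) (a j) (∂_{v j} f)

@[simp]
theorem advection_apply (a : ι → 𝓢(D, ℝ)) (v : ι → D) (f : 𝓢(D, V)) (x : D) :
    advection a v f x = ∑ j, a j x • ∂_{v j} f x := by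
  simp [advection]

theorem lineDerivOp_advection (a : ι → 𝓢(D, ℝ)) (v : ι → D) (f : 𝓢(D, V)) (w : D) :
    ∂_{w} (advection a v f) =
      advection (fun j => ∂_{w} (a j)) v f + advection a v (∂_{w} f) := by
  simp only [advection, lineDerivOp_sum, lineDerivOp_pairing, lineDerivOp_comm f w,
    Finset.sum_add_distrib]

section integration

open MeasureTheory

variable [MeasurableSpace D] [BorelSpace D] [FiniteDimensional ℝ D] {μ : Measure D}
  [μ.IsAddHaarMeasure] {H : Type*} [NormedAddCommGroup H] [InnerProductSpace ℝ H]

theorem integrable_mul (f g : 𝓢(D, ℝ)) : Integrable (fun x => f x * g x) μ :=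
  (pairing (ContinuousLinearMap.mul ℝ ℝ) f g).integrable

theorem integrable_inner (f g : 𝓢(D, H)) : Integrable (fun x => ⟪f x, g x⟫) μ :=
  (pairing (innerSL ℝ) f g).integrable

theorem integral_mul_inner_lineDerivOp_self (a : 𝓢(D, ℝ)) (w : 𝓢(D, H)) (v : D) :
    ∫ x, a x * ⟪∂_{v} w x, w x⟫ ∂μ = -(1 / 2) * ∫ x, ∂_{v} a x * ‖w x‖ ^ 2 ∂μ := by
  set N := pairing (innerSL ℝ) w w
  have hN : ∀ x, N x = ‖w x‖ ^ 2 := fun x => real_inner_self_eq_norm_sq (w x)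
  have hdN : ∀ x, ∂_{v} N x = 2 * ⟪∂_{v} w x, w x⟫ := fun x => by
    have hpair : ∀ f g : 𝓢(D, H), pairing (innerSL ℝ) f g x = ⟪f x, g x⟫ := fun _ _ => rfl
    simp only [N, lineDerivOp_pairing, add_apply, hpair, real_inner_comm (w x)]
    ring
  have ibp := integral_mul_lineDerivOp_right_eq_neg_left (μ := μ) a N v
  simp only [hN, hdN, mul_left_comm (a _), integral_const_mul] at ibp
  linarith

theorem integral_inner_advection_self_eq_zero (a : ι → 𝓢(D, ℝ)) (v : ι → D)
    (hdiv : ∀ x, ∑ j, ∂_{v j} (a j) x = 0) (w : 𝓢(D, H)) :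
    ∫ x, ⟪advection a v w x, w x⟫ ∂μ = 0 := by
  simp only [advection_apply, sum_inner, real_inner_smul_left]
  rw [integral_finsetSum _ fun j _ => ?_]
  · simp only [integral_mul_inner_lineDerivOp_self, ← Finset.mul_sum]
    rw [← integral_finsetSum _ fun j _ => ?_]
    · simp [← Finset.sum_mul, hdiv]
    convert integrable_mul (μ := μ) (∂_{v j} (a j)) (pairing (innerSL ℝ) w w) using 3
    exact (real_inner_self_eq_norm_sq _).symm
  exact integrable_mul (μ := μ) (a j) (pairing (innerSL ℝ) (∂_{v j} w) w)

theorem integral_inner_advection_lineDerivOp_lineDerivOp (a : ι → 𝓢(D, ℝ)) (v : ι → D)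
    (hdiv : ∀ x, ∑ j, ∂_{v j} (a j) x = 0) (f : 𝓢(D, H)) (w : D) :
    ∫ x, ⟪advection a v f x, ∂_{w} (∂_{w} f) x⟫ ∂μ =
      -∫ x, ⟪advection (fun j => ∂_{w} (a j)) v f x, ∂_{w} f x⟫ ∂μ := by
  have ibp : ∫ x, ⟪advection a v f x, ∂_{w} (∂_{w} f) x⟫ ∂μ =
      -∫ x, ⟪∂_{w} (advection a v f) x, ∂_{w} f x⟫ ∂μ :=
    integral_bilinear_lineDerivOp_right_eq_neg_left _ _ (innerSL ℝ) w
  simp only [lineDerivOp_advection, add_apply, inner_add_left] at ibp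
  rw [ibp, integral_add (integrable_inner _ _) (integrable_inner _ _),
    integral_inner_advection_self_eq_zero a v hdiv, add_zero]

end integration

end SchwartzMap

section trilinear

variable {ι : Type*} [Fintype ι] (g : ι → EuclideanSpace ℝ ι) (s : Finset ι)

theorem sum_mul_mul_eq_sum_mul_inner :
    ∑ k, ∑ j, ∑ i ∈ s, g j k * g i j * g i k = ∑ i ∈ s, ∑ j, g i j * ⟪g j, g i⟫ := by
  simp only [PiLp.inner_apply, RCLike.inner_apply, conj_trivial, Finset.mul_sum]
  symm
  rw [Finset.sum_comm]
  refine (Finset.sum_congr rfl fun j _ => Finset.sum_comm).trans Finset.sum_comm |>.trans ?_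
  refine Finset.sum_congr rfl fun k _ => Finset.sum_congr rfl fun j _ =>
    Finset.sum_congr rfl fun i _ => ?_
  ring

theorem abs_sum_mul_inner_le :
    |∑ i ∈ s, ∑ j, g i j * ⟪g j, g i⟫| ≤ √(∑ j, ‖g j‖ ^ 2) * ∑ i ∈ s, ‖g i‖ ^ 2 := by
  have hrow : ∀ i, |∑ j, g i j * ⟪g j, g i⟫| ≤ √(∑ j, ‖g j‖ ^ 2) * ‖g i‖ ^ 2 := fun i =>
    calc |∑ j, g i j * ⟪g j, g i⟫| ≤ ∑ j, |g i j| * ‖g j‖ * ‖g i‖ := by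
          refine (Finset.abs_sum_le_sum_abs _ _).trans (Finset.sum_le_sum fun j _ => ?_)
          rw [abs_mul, mul_assoc]
          gcongr
          exact abs_real_inner_le_norm _ _
      _ = (∑ j, |g i j| * ‖g j‖) * ‖g i‖ := by rw [Finset.sum_mul]
      _ ≤ (√(∑ j, |g i j| ^ 2) * √(∑ j, ‖g j‖ ^ 2)) * ‖g i‖ := by
          gcongr
          exact Real.sum_mul_le_sqrt_mul_sqrt _ _ _
      _ = √(∑ j, ‖g j‖ ^ 2) * ‖g i‖ ^ 2 := by
          rw [EuclideanSpace.norm_eq]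
          simp only [Real.norm_eq_abs]
          ring
  rw [Finset.mul_sum]
  exact (Finset.abs_sum_le_sum_abs _ _).trans (Finset.sum_le_sum fun i _ => hrow i)

end trilinear

theorem pdC_eq_pd_apply {f : E3 → E3} {x : E3} (hf : DifferentiableAt ℝ f x) (i k : Fin 3) :
    pdC i k f x = pd i f x k := by
  show fderiv ℝ (EuclideanSpace.proj k ∘ f) x (e3 i) = _
  rw [((EuclideanSpace.proj k).hasFDerivAt.comp x hf.hasFDerivAt).fderiv]
  rfl

theorem abs_sum_pdC_mul_le {f : E3 → E3} {x : E3} (hf : DifferentiableAt ℝ f x) :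
    |∑ k, ∑ j, ∑ i ∈ ({0, 1} : Finset (Fin 3)), pdC j k f x * pdC i j f x * pdC i k f x| ≤
      √(gradNormSq f x) * gradHNormSq f x := by
  simp only [pdC_eq_pd_apply hf, sum_mul_mul_eq_sum_mul_inner (fun j => pd j f x)]
  exact abs_sum_mul_inner_le _ _

section schwartz

open SchwartzMap LineDeriv

theorem pd_eq_lineDerivOp (U : 𝓢(E3, E3)) (i : Fin 3) : pd i U = ∂_{e3 i} U :=
  rfl

def coordinate (U : 𝓢(E3, E3)) (k : Fin 3) : 𝓢(E3, ℝ) :=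
  U.postcompCLM (EuclideanSpace.proj k)

theorem lineDerivOp_coordinate_apply (U : 𝓢(E3, E3)) (k : Fin 3) (v x : E3) :
    ∂_{v} (coordinate U k) x = ∂_{v} U x k := by
  rw [coordinate, lineDerivOp_postcompCLM]
  rfl

theorem advect_eq_advection (U : 𝓢(E3, E3)) : advect U U = advection (coordinate U) e3 U := by
  funext x
  rw [advection_apply]
  rfl

theorem div3_eq_sum_lineDerivOp_coordinate (U : 𝓢(E3, E3)) (x : E3) :
    div3 U x = ∑ j, ∂_{e3 j} (coordinate U j) x := by
  simp only [lineDerivOp_coordinate_apply]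
  rfl

theorem sum_inner_advection_lineDerivOp_coordinate (U : 𝓢(E3, E3)) (s : Finset (Fin 3))
    (x : E3) :
    ∑ i ∈ s, ⟪advection (fun j => ∂_{e3 i} (coordinate U j)) e3 U x, ∂_{e3 i} U x⟫ =
      ∑ k, ∑ j, ∑ i ∈ s, pdC j k U x * pdC i j U x * pdC i k U x := by
  simp only [pdC_eq_pd_apply U.differentiableAt, pd_eq_lineDerivOp,
    sum_mul_mul_eq_sum_mul_inner (fun j => ∂_{e3 j} U x), advection_apply,
    lineDerivOp_coordinate_apply, sum_inner, real_inner_smul_left]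

theorem integral_inner_advect_lapH (U : 𝓢(E3, E3)) (hU : ∀ x, div3 U x = 0) :
    (∫ x, ⟪advect U U x, lapH U x⟫) =
      -∫ x, ∑ k, ∑ j, ∑ i ∈ ({0, 1} : Finset (Fin 3)),
        pdC j k U x * pdC i j U x * pdC i k U x := by
  have hdiv : ∀ x, ∑ j, ∂_{e3 j} (coordinate U j) x = 0 := fun x => by
    rw [← div3_eq_sum_lineDerivOp_coordinate, hU]
  calc (∫ x, ⟪advect U U x, lapH U x⟫)
      = ∑ i ∈ ({0, 1} : Finset (Fin 3)),
          ∫ x, ⟪advection (coordinate U) e3 U x, ∂_{e3 i} (∂_{e3 i} U) x⟫ := by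
        rw [← integral_finsetSum _ fun i _ => integrable_inner _ _]
        simp only [advect_eq_advection, lapH, pd_eq_lineDerivOp, inner_sum]
    _ = -∫ x, ∑ i ∈ ({0, 1} : Finset (Fin 3)),
          ⟪advection (fun j => ∂_{e3 i} (coordinate U j)) e3 U x, ∂_{e3 i} U x⟫ := by
        rw [integral_finsetSum _ fun i _ => integrable_inner _ _, ← Finset.sum_neg_distrib]
        simp only [integral_inner_advection_lineDerivOp_lineDerivOp _ _ hdiv]
    _ = _ := by simp only [sum_inner_advection_lineDerivOp_coordinate]

theorem integrable_sqrt_gradNormSq_mul_gradHNormSq (U : 𝓢(E3, E3)) :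
    Integrable (fun x => √(gradNormSq U x) * gradHNormSq U x) := by
  have hH : Integrable (gradHNormSq U) := by
    refine integrable_finsetSum _ fun i _ => ?_
    simpa only [pd_eq_lineDerivOp] using
      ((∂_{e3 i} U).memLp (2 : ℕ)).integrable_norm_pow two_ne_zero
  refine hH.bdd_mul (c := √(∑ j, SchwartzMap.seminorm ℝ 0 0 (∂_{e3 j} U) ^ 2)) ?_
    (ae_of_all _ fun x => ?_)
  · have hG : Continuous (gradNormSq U) := by
      unfold gradNormSq
      simp only [pd_eq_lineDerivOp]
      fun_prop
    exact hG.sqrt.aestronglyMeasurable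
  · rw [Real.norm_of_nonneg (Real.sqrt_nonneg _)]
    unfold gradNormSq
    gcongr with j
    exact norm_le_seminorm ℝ (∂_{e3 j} U) x

end schwartz

/-- For every Schwartz divergence-free vector field `u` on ℝ³,
`∫ ((u·∇)u)·Δₕu dx = -∫ Σ_{k,j=1}^3 Σ_{i=1}^2 ∂ⱼuₖ ∂ᵢuⱼ ∂ᵢuₖ dx`, and consequently
`|∫ ((u·∇)u)·Δₕu dx| ≤ C ∫ |∇u| |∇ₕu|² dx` for a universal constant `C > 0`. -/
theorem horizontal_laplacian_trilinear_identity :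
    ∃ C : ℝ, 0 < C ∧
      ∀ U : SchwartzMap E3 E3, (∀ x, div3 (⇑U) x = 0) →
        ((∫ x, ⟪advect (⇑U) (⇑U) x, lapH (⇑U) x⟫) =
            -∫ x, ∑ k : Fin 3, ∑ j : Fin 3, ∑ i ∈ ({0, 1} : Finset (Fin 3)),
              pdC j k (⇑U) x * pdC i j (⇑U) x * pdC i k (⇑U) x) ∧
          |∫ x, ⟪advect (⇑U) (⇑U) x, lapH (⇑U) x⟫| ≤
            C * ∫ x, Real.sqrt (gradNormSq (⇑U) x) * gradHNormSq (⇑U) x := by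
  refine ⟨1, one_pos, fun U hU => ⟨integral_inner_advect_lapH U hU, ?_⟩⟩
  rw [integral_inner_advect_lapH U hU, abs_neg, one_mul, ← Real.norm_eq_abs]
  refine norm_integral_le_of_norm_le (integrable_sqrt_gradNormSq_mul_gradHNormSq U)
    (ae_of_all _ fun x => ?_)
  exact abs_sum_pdC_mul_le U.differentiableAt
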